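/- arXiv:2103.16592 — 7 statements merged into one kernel-verified Lean document; each statement's English description precedes it below -/
import Mathlib

section
/- (Key construction in the proof of Theorem 3.5.) Let A be a type with an axiom-set (I, C), let Y, V : Set A with Y ⊆ V, let ā ∈ Y, and let f : (x : A) → (j : I x) → A be a choice function such that for every x ∈ Y and every j : I x, f x j ∈ C x j and f x j ∈ Y. Define X : ℕ → Set A by X 0 := {ā} and X (n+1) := X n ∪ {f x j | x ∈ X n, j : I x}, and set X* := ⋃ₙ X n. Then ā ∈ X*, X* ⊆ Y, and X* ⊆ τ(X*); consequently ā ⋉ V. -/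
/-- The monotone operator associated to an axiom-set `(I, C)` on `A`. -/
def tau {A : Type} (I : A → Type) (C : ∀ x : A, I x → Set A) (Z : Set A) : Set A :=
  {x : A | x ∈ Z ∧ ∀ i : I x, ∃ y ∈ C x i, y ∈ Z}

/-- `Wmax I C V` is the union of all postfixed points of `tau` contained in `V`. -/
def Wmax {A : Type} (I : A → Type) (C : ∀ x : A, I x → Set A) (V : Set A) : Set A :=
  ⋃₀ {Z : Set A | Z ⊆ tau I C Z ∧ Z ⊆ V}

/-- The positivity relation coinductively generated by `(I, C)`. -/
def Pos {A : Type} (I : A → Type) (C : ∀ x : A, I x → Set A) (a : A) (V : Set A) : Prop :=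
  a ∈ Wmax I C V

/-- The sequence of subsets `X n` built from the choice function `f` starting at `abar`:
`X 0 = {abar}` and `X (n+1) = X n ∪ {f x j | x ∈ X n, j : I x}`. -/
def Xseq {A : Type} (I : A → Type) (f : ∀ x : A, I x → A) (abar : A) : ℕ → Set A
  | 0 => {abar}
  | n + 1 => Xseq I f abar n ∪ {y : A | ∃ x ∈ Xseq I f abar n, ∃ j : I x, y = f x j}

/-- Key construction in the proof of Theorem 3.5. -/
theorem Xstar_spec {A : Type} (I : A → Type) (C : ∀ x : A, I x → Set A)
    (Y V : Set A) (hYV : Y ⊆ V) (abar : A) (habar : abar ∈ Y)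
    (f : ∀ x : A, I x → A)
    (hf : ∀ x ∈ Y, ∀ j : I x, f x j ∈ C x j ∧ f x j ∈ Y) :
    abar ∈ ⋃ n : ℕ, Xseq I f abar n ∧
      (⋃ n : ℕ, Xseq I f abar n) ⊆ Y ∧
      (⋃ n : ℕ, Xseq I f abar n) ⊆ tau I C (⋃ n : ℕ, Xseq I f abar n) ∧
      Pos I C abar V := by
  have hmem : abar ∈ ⋃ n : ℕ, Xseq I f abar n :=
    Set.mem_iUnion.2 ⟨0, rfl⟩
  have hXnY : ∀ n, Xseq I f abar n ⊆ Y := by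
    intro n
    induction n with
    | zero => intro x hx; cases hx; exact habar
    | succ n ih =>
      rintro x (hx | ⟨z, hz, j, rfl⟩)
      · exact ih hx
      · exact (hf z (ih hz) j).2
  have hY : (⋃ n : ℕ, Xseq I f abar n) ⊆ Y := by
    intro x hx
    obtain ⟨n, hn⟩ := Set.mem_iUnion.1 hx
    exact hXnY n hn
  have htau : (⋃ n : ℕ, Xseq I f abar n) ⊆ tau I C (⋃ n : ℕ, Xseq I f abar n) := by
    intro x hx
    obtain ⟨n, hn⟩ := Set.mem_iUnion.1 hx
    refine ⟨hx, fun i => ⟨f x i, (hf x (hXnY n hn) i).1, ?_⟩⟩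
    exact Set.mem_iUnion.2 ⟨n + 1, Or.inr ⟨x, hn, i, rfl⟩⟩
  exact ⟨hmem, hY, htau, ⟨_, ⟨htau, fun x hx => hYV (hY hx)⟩, hmem⟩⟩
end

section
/- (Compatibility of the coinductive positivity relation with the inductive basic cover, i.e. the pair (◁, ⋉) forms a basic topology.) Let A be a type with an axiom-set (I, C), ◁ the basic cover inductively generated by (I, C), and ⋉ the positivity relation coinductively generated by (I, C). For all a : A and U, V : Set A: if a ⋉ V and a ◁ U, then there exists x : A with x ∈ U and x ⋉ V. -/
/-- The basic cover inductively generated by the axiom-set `(I, C)`. -/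
inductive Cover {A : Type} (I : A → Type) (C : ∀ x : A, I x → Set A) : A → Set A → Prop
  | rf {a : A} {V : Set A} : a ∈ V → Cover I C a V
  | tr {a : A} {V : Set A} (i : I a) : (∀ y ∈ C a i, Cover I C y V) → Cover I C a V

/-- Compatibility of the coinductive positivity relation with the inductive basic cover. -/
theorem compatibility {A : Type} (I : A → Type) (C : ∀ x : A, I x → Set A)
    (a : A) (U V : Set A) (hpos : Pos I C a V) (hcov : Cover I C a U) :
    ∃ x : A, x ∈ U ∧ Pos I C x V := by
  induction hcov with
  | rf h => exact ⟨_, h, hpos⟩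
  | tr i h ih =>
    obtain ⟨Z, ⟨hpost, hZV⟩, haZ⟩ := hpos
    obtain ⟨_, hclose⟩ := hpost haZ
    obtain ⟨y, hyC, hyZ⟩ := hclose i
    exact ih y hyC ⟨Z, ⟨hpost, hZV⟩, hyZ⟩
end

section
/- (Classical characterization of the positivity relation.) Let A be a type with an axiom-set (I, C), ◁ the basic cover inductively generated by (I, C), and ⋉ the positivity relation coinductively generated by (I, C). Then (using classical logic) for every a : A and V : Set A: a ⋉ V ↔ ¬ (a ◁ Vᶜ), where Vᶜ is the complement of V in A. -/
private lemma cover_aux {A : Type} {I : A → Type} {C : ∀ x : A, I x → Set A}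
    {a : A} {W : Set A} (h : Cover I C a W) :
    ∀ Z : Set A, Z ⊆ tau I C Z → Z ⊆ Wᶜ → a ∉ Z := by
  induction h with
  | rf h => exact fun Z _ hsub haZ => hsub haZ h
  | tr i h ih =>
    intro Z hpost hsub haZ
    obtain ⟨y, hyC, hyZ⟩ := (hpost haZ).2 i
    exact ih y hyC Z hpost hsub hyZ

/-- Classical characterization of the positivity relation: `a ⋉ V ↔ ¬ (a ◁ Vᶜ)`. -/
theorem Pos_iff_not_Cover_compl {A : Type} (I : A → Type) (C : ∀ x : A, I x → Set A)
    (a : A) (V : Set A) :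
    Pos I C a V ↔ ¬ Cover I C a Vᶜ := by
  constructor
  · rintro ⟨Z, ⟨hpost, hsub⟩, haZ⟩ hcov
    exact cover_aux hcov Z hpost (by simpa using hsub) haZ
  · intro h
    refine ⟨{x | ¬ Cover I C x Vᶜ}, ⟨?_, ?_⟩, h⟩
    · intro x hx
      refine ⟨hx, fun i => ?_⟩
      by_contra hc
      push_neg at hc
      exact hx (Cover.tr i fun y hy => not_not.mp (hc y hy))
    · intro x hx
      by_contra hv
      exact hx (Cover.rf hv)
end

section
/- (Lemma 2.3, eqcov.) Let B be a type with an equivalence relation (Setoid) R, let A := Quotient R, and let (I, C) be an axiom-set on A. Define the axiom-set (I^R, C^R) on B by: I^R b := I ⟦b⟧ ⊕ {y : B // R b y}; C^R b (Sum.inl j) := {x : B | ⟦x⟧ ∈ C ⟦b⟧ j}; C^R b (Sum.inr ⟨y, _⟩) := {y}. Then the poset {V : Set A | ◁_{I,C}(V) = V} of fixpoints of the cover inductively generated by (I, C), ordered by inclusion, is order-isomorphic to the poset {W : Set B | ◁_{I^R,C^R}(W) = W} of fixpoints of the cover inductively generated by (I^R, C^R); i.e. the two suplattices of formal open subsets are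 isomorphic. -/
/-- `◁(V)` : the set of elements covered by `V`. -/
def CoverSet {A : Type} (I : A → Type) (C : ∀ x : A, I x → Set A) (V : Set A) : Set A :=
  {x : A | Cover I C x V}

section QuotientAxiomSet

variable {B : Type} (R : Setoid B)

/-- The index family of the axiom-set on `B` induced by an axiom-set on `Quotient R`. -/
def IR (I : Quotient R → Type) (b : B) : Type :=
  I ⟦b⟧ ⊕ {y : B // R.r b y}

/-- The family of subsets of the axiom-set on `B` induced by an axiom-set on `Quotient R`. -/
def CR (I : Quotient R → Type) (C : ∀ x : Quotient R, I x → Set (Quotient R))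
    (b : B) : IR R I b → Set B
  | Sum.inl j => {x : B | (⟦x⟧ : Quotient R) ∈ C ⟦b⟧ j}
  | Sum.inr y => {y.1}

end QuotientAxiomSet

section Aux

variable {B : Type} (R : Setoid B) (I : Quotient R → Type)
    (C : ∀ x : Quotient R, I x → Set (Quotient R))

lemma cover_of_coverR' {b : B} {W : Set B}
    (h : Cover (IR R I) (CR R I C) b W) :
    ∀ V : Set (Quotient R), W = Quotient.mk R ⁻¹' V → Cover I C ⟦b⟧ V := by
  induction h with
  | rf h => intro V hV; subst hV; exact Cover.rf h
  | tr i _ ih =>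
    match i with
    | Sum.inl j =>
      intro V hV
      refine Cover.tr j (fun y hy => ?_)
      obtain ⟨x, rfl⟩ := Quotient.exists_rep y
      exact ih x hy V hV
    | Sum.inr ⟨y, hy⟩ =>
      intro V hV
      have := ih y rfl V hV
      rwa [Quotient.sound hy]

lemma cover_of_coverR {b : B} {V : Set (Quotient R)}
    (h : Cover (IR R I) (CR R I C) b (Quotient.mk R ⁻¹' V)) :
    Cover I C ⟦b⟧ V := cover_of_coverR' R I C h V rfl

lemma coverR_of_cover {a : Quotient R} {V : Set (Quotient R)}
    (h : Cover I C a V) :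
    ∀ b : B, (⟦b⟧ : Quotient R) = a → Cover (IR R I) (CR R I C) b (Quotient.mk R ⁻¹' V) := by
  induction h with
  | rf h => exact fun b hb => Cover.rf (by simp [Set.mem_preimage, hb, h])
  | @tr a V i hC ih =>
    intro b hb
    subst hb
    exact Cover.tr (Sum.inl i) (fun x hx => ih ⟦x⟧ hx x rfl)

lemma cover_iff {b : B} {V : Set (Quotient R)} :
    Cover I C ⟦b⟧ V ↔ Cover (IR R I) (CR R I C) b (Quotient.mk R ⁻¹' V) :=
  ⟨fun h => coverR_of_cover R I C h b rfl, cover_of_coverR R I C⟩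

lemma saturated {W : Set B} (hW : CoverSet (IR R I) (CR R I C) W = W)
    {b y : B} (hy : y ∈ W) (hr : R.r b y) : b ∈ W := by
  rw [← hW]
  exact Cover.tr (Sum.inr ⟨y, hr⟩) (fun x hx => by
    rcases hx with rfl; exact Cover.rf hy)

end Aux

/-- Lemma 2.3 (eqcov): the suplattice of fixpoints of the cover inductively generated on a
quotient `A = B / R` is isomorphic to the suplattice of fixpoints of the cover inductively
generated on `B` by the induced axiom-set. -/
theorem eqcov {B : Type} (R : Setoid B) (I : Quotient R → Type)
    (C : ∀ x : Quotient R, I x → Set (Quotient R)) :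
    Nonempty
      ({V : Set (Quotient R) // CoverSet I C V = V} ≃o
        {W : Set B // CoverSet (IR R I) (CR R I C) W = W}) := by
  have hsurj : Function.Surjective (Quotient.mk R) := Quotient.exists_rep
  refine ⟨{
    toFun := fun V => ⟨Quotient.mk R ⁻¹' V.1, ?_⟩
    invFun := fun W => ⟨Quotient.mk R '' W.1, ?_⟩
    left_inv := ?_
    right_inv := ?_
    map_rel_iff' := ?_ }⟩
  · ext b
    constructor
    · intro hb
      have := cover_of_coverR R I C hb
      rw [Set.mem_preimage, ← V.2]
      exact this
    · exact fun hb => Cover.rf hb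
  · ext a
    constructor
    · intro ha
      obtain ⟨b, rfl⟩ := hsurj a
      have hb : Cover (IR R I) (CR R I C) b (Quotient.mk R ⁻¹' (Quotient.mk R '' W.1)) :=
        coverR_of_cover R I C ha b rfl
      have hpre : Quotient.mk R ⁻¹' (Quotient.mk R '' W.1) = W.1 := by
        ext x
        constructor
        · rintro ⟨y, hy, hxy⟩
          exact saturated R I C W.2 hy (Quotient.exact hxy.symm)
        · exact fun hx => ⟨x, hx, rfl⟩
      rw [hpre] at hb
      have : b ∈ CoverSet (IR R I) (CR R I C) W.1 := hb
      rw [W.2] at this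
      exact ⟨b, this, rfl⟩
    · exact fun ha => Cover.rf ha
  · intro V
    exact Subtype.ext (Set.image_preimage_eq V.1 hsurj)
  · intro W
    apply Subtype.ext
    ext x
    constructor
    · rintro ⟨y, hy, hxy⟩
      exact saturated R I C W.2 hy (Quotient.exact hxy.symm)
    · exact fun hx => ⟨x, hx, rfl⟩
  · intro V V'
    simp only [Equiv.coe_fn_mk, Subtype.mk_le_mk]
    exact ⟨fun h => (Set.preimage_subset_preimage_iff (by rw [Set.range_eq_univ.mpr hsurj]; exact Set.subset_univ _)).mp h, fun h => Set.preimage_mono h⟩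
end

section
/- (Lemma 2.4, ceqcov.) Let B be a type with an equivalence relation (Setoid) R, let A := Quotient R, and let (I, C) be an axiom-set on A. Define the axiom-set (I^R, C^R) on B by: I^R b := I ⟦b⟧ ⊕ {y : B // R b y}; C^R b (Sum.inl j) := {x : B | ⟦x⟧ ∈ C ⟦b⟧ j}; C^R b (Sum.inr ⟨y, _⟩) := {y}. Then the poset {V : Set A | ⋉_{I,C}(V) = V} of fixpoints of the positivity relation coinductively generated by (I, C), ordered by inclusion, is order-isomorphic to the poset {W : Set B | ⋉_{I^R,C^R}(W) = W} of fixpoints of the positivity relation coinductively generated by (I^R, C^R); i.e. the two suplattices of formal closed subsets are isomorphic. -/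
/-- `⋉(V)` : the set of elements positive with respect to `V`. -/
def PosSet {A : Type} (I : A → Type) (C : ∀ x : A, I x → Set A) (V : Set A) : Set A :=
  {x : A | Pos I C x V}

lemma tau_mono {A : Type} (I : A → Type) (C : ∀ x : A, I x → Set A) {Z Z' : Set A}
    (h : Z ⊆ Z') : tau I C Z ⊆ tau I C Z' := by
  rintro x ⟨hx, hi⟩
  exact ⟨h hx, fun i => (hi i).imp fun y ⟨hy, hyZ⟩ => ⟨hy, h hyZ⟩⟩

lemma posSet_eq_iff {A : Type} (I : A → Type) (C : ∀ x : A, I x → Set A) (V : Set A) :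
    PosSet I C V = V ↔ V ⊆ tau I C V := by
  have hsub : Wmax I C V ⊆ V := by rintro x ⟨Z, hZ, hxZ⟩; exact hZ.2 hxZ
  have hpost : Wmax I C V ⊆ tau I C (Wmax I C V) := by
    rintro x ⟨Z, hZ, hxZ⟩
    exact tau_mono I C (fun y hy => Set.mem_sUnion.2 ⟨Z, hZ, hy⟩) (hZ.1 hxZ)
  constructor
  · intro h x hx
    have hx' : x ∈ Wmax I C V := by rw [← h] at hx; exact hx
    exact tau_mono I C hsub (hpost hx')
  · intro h
    apply Set.Subset.antisymm hsub
    intro x hx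
    exact ⟨V, ⟨h, Set.Subset.rfl⟩, hx⟩

/-- Lemma 2.4 (ceqcov): the suplattice of fixpoints of the positivity relation coinductively
generated on a quotient `A = B / R` is isomorphic to the suplattice of fixpoints of the
positivity relation coinductively generated on `B` by the induced axiom-set. -/
theorem ceqcov {B : Type} (R : Setoid B) (I : Quotient R → Type)
    (C : ∀ x : Quotient R, I x → Set (Quotient R)) :
    Nonempty
      ({V : Set (Quotient R) // PosSet I C V = V} ≃o
        {W : Set B // PosSet (IR R I) (CR R I C) W = W}) := by
  -- forward: preimage; backward: image
  have hfwd : ∀ V : Set (Quotient R), V ⊆ tau I C V →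
      (Quotient.mk R ⁻¹' V) ⊆ tau (IR R I) (CR R I C) (Quotient.mk R ⁻¹' V) := by
    intro V hV b hb
    refine ⟨hb, fun i => ?_⟩
    cases i with
    | inl j =>
        obtain ⟨q, hq, hqV⟩ := (hV hb).2 j
        obtain ⟨y, rfl⟩ := Quotient.exists_rep q
        exact ⟨y, hq, hqV⟩
    | inr y =>
        refine ⟨y.1, rfl, ?_⟩
        show (⟦y.1⟧ : Quotient R) ∈ V
        rwa [← Quotient.sound y.2]
  have hsat : ∀ W : Set B, W ⊆ tau (IR R I) (CR R I C) W →
      ∀ b c, b ∈ W → R.r b c → c ∈ W := by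
    intro W hW b c hb hr
    obtain ⟨y, hy, hyW⟩ := (hW hb).2 (Sum.inr ⟨c, hr⟩)
    cases hy
    exact hyW
  have hbwd : ∀ W : Set B, W ⊆ tau (IR R I) (CR R I C) W →
      (Quotient.mk R '' W) ⊆ tau I C (Quotient.mk R '' W) := by
    rintro W hW q ⟨b, hb, rfl⟩
    refine ⟨⟨b, hb, rfl⟩, fun j => ?_⟩
    obtain ⟨y, hy, hyW⟩ := (hW hb).2 (Sum.inl j)
    exact ⟨⟦y⟧, hy, ⟨y, hyW, rfl⟩⟩
  refine ⟨{
    toFun := fun V => ⟨Quotient.mk R ⁻¹' V.1,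
      (posSet_eq_iff _ _ _).2 (hfwd V.1 ((posSet_eq_iff _ _ _).1 V.2))⟩
    invFun := fun W => ⟨Quotient.mk R '' W.1,
      (posSet_eq_iff _ _ _).2 (hbwd W.1 ((posSet_eq_iff _ _ _).1 W.2))⟩
    left_inv := by
      rintro ⟨V, hV⟩
      ext q
      simp only [Set.mem_image, Set.mem_preimage]
      constructor
      · rintro ⟨b, hb, rfl⟩; exact hb
      · intro hq
        obtain ⟨b, rfl⟩ := Quotient.exists_rep q
        exact ⟨b, hq, rfl⟩
    right_inv := by
      rintro ⟨W, hW⟩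
      have hW' := (posSet_eq_iff _ _ _).1 hW
      ext b
      simp only [Set.mem_preimage, Set.mem_image]
      constructor
      · rintro ⟨c, hc, hcb⟩
        exact hsat W hW' c b hc (Quotient.exact hcb)
      · intro hb; exact ⟨b, hb, rfl⟩
    map_rel_iff' := by
      rintro ⟨V, hV⟩ ⟨V', hV'⟩
      show Quotient.mk R ⁻¹' V ⊆ Quotient.mk R ⁻¹' V' ↔ V ⊆ V'
      constructor
      · intro h q hq
        obtain ⟨b, rfl⟩ := Quotient.exists_rep q
        exact h hq
      · exact fun h b hb => h hb }⟩
end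

section
/- (Formal open subsets form a complete suplattice.) Let A be a type with an axiom-set (I, C) and ◁ the basic cover inductively generated by (I, C). For any index type K and any family V : K → Set A with ◁(V k) = V k for every k : K, the subset ◁(⋃ₖ V k) is a fixpoint of ◁(-) and it is the least fixpoint of ◁(-) containing every V k; hence the fixpoints of ◁(-), ordered by inclusion, form a complete suplattice with suprema given by W ↦ ◁(⋃ W). -/
theorem Cover_trans {A : Type} {I : A → Type} {C : ∀ x : A, I x → Set A} {a : A} {U W : Set A}
    (hU : Cover I C a U) (hW : ∀ u ∈ U, Cover I C u W) : Cover I C a W := by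
  induction hU with
  | rf hv => exact hW _ hv
  | tr i _ ih => exact Cover.tr i (fun y hy => ih y hy hW)

/-- Formal open subsets form a complete suplattice: for a family of fixpoints of `◁(-)`,
`◁(⋃ₖ V k)` is a fixpoint, and it is the least fixpoint containing every `V k`. -/
theorem CoverSet_fixpoints_suplattice {A : Type} (I : A → Type) (C : ∀ x : A, I x → Set A)
    (K : Type) (V : K → Set A) (h : ∀ k : K, CoverSet I C (V k) = V k) :
    CoverSet I C (CoverSet I C (⋃ k : K, V k)) = CoverSet I C (⋃ k : K, V k) ∧
      (∀ k : K, V k ⊆ CoverSet I C (⋃ k : K, V k)) ∧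
      ∀ W : Set A, CoverSet I C W = W → (∀ k : K, V k ⊆ W) →
        CoverSet I C (⋃ k : K, V k) ⊆ W := by
  refine ⟨?_, ?_, ?_⟩
  · ext x
    constructor
    · intro hx
      exact Cover_trans hx (fun u hu => hu)
    · exact Cover.rf
  · intro k x hx
    exact Cover.rf (Set.mem_iUnion.2 ⟨k, hx⟩)
  · intro W hW hk x hx
    have : Cover I C x W := Cover_trans hx (fun u hu => by
      obtain ⟨k, hk'⟩ := Set.mem_iUnion.1 hu
      exact Cover.rf (hk k hk'))
    rw [← hW]; exact this
end

section
/- (Proposition 6.4; a ZFC result.) Let I : ZFSet satisfy the algebraic characterization of weak inaccessibility: (1) I is regular; (2) ω ∈ I (ZFSet.omega ∈ I); (3) for every a ∈ I, ⋃ a ∈ I; (4) I is ∧-closed: for every a ∈ I such that every u ∈ a satisfies u ⊆ {∅}, the set ⋀a := {x ∈ {∅} | ∀ u ∈ a, x ∈ u} belongs to I; (5) for all a, b ∈ I there exists c ∈ I which is full in mv(a, b). Then there exists a strongly inaccessible cardinal κ (Cardinal.IsInaccessible κ) such that for every x : ZFSet, x ∈ I ↔ ZFSet.rank x < κ.ord;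 that is, I = V_κ. -/
/-!
Regularity of `I` is replacement for families indexed by members of `I`; with closure under
unions this gives separation, and fullness of `mv(a, ω)` gives power sets, since every subset
of `a` is read off from a multi-valued function into `ω` refining its characteristic function.
By `∈`-induction every ordinal below `θ = rank I` and then every `V_β` with `β < θ` lies in `I`,
so `I = V_θ`. By induction on `β`, replacement along a surjection from a member of `I` onto `β`
gives `β < θ`; applied to power sets this makes `θ` an initial ordinal whose cardinal is a
strong limit, and applied to a cofinal sequence it makes that cardinal regular.
-/

universe u

/-- A ZF-set is transitive if every element of an element is an element. -/
def ZTransitive (A : ZFSet.{u}) : Prop :=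
  ∀ x ∈ A, ∀ y ∈ x, y ∈ A

/-- A ZF-set `A` is regular if it is transitive and inhabited, and for every `a ∈ A` and every
set `R` of pairs with `R ⊆ A ×ˢ A` which is a multi-valued function on `a` into `A`, there is
`c ∈ A` such that `R` restricted to `a × c` is a multi-valued function from `a` to `c` that is
surjective on `c`. -/
def ZRegular (A : ZFSet.{u}) : Prop :=
  ZTransitive A ∧ (∃ x, x ∈ A) ∧
    ∀ a ∈ A, ∀ R : ZFSet.{u}, R ⊆ ZFSet.prod A A →
      (∀ x ∈ a, ∃ y ∈ A, ZFSet.pair x y ∈ R) →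
      ∃ c ∈ A, (∀ x ∈ a, ∃ y ∈ c, ZFSet.pair x y ∈ R) ∧
        (∀ y ∈ c, ∃ x ∈ a, ZFSet.pair x y ∈ R)

/-- `Zmv a b r` : `r` is a multi-valued function from `a` to `b`. -/
def Zmv (a b r : ZFSet.{u}) : Prop :=
  r ⊆ ZFSet.prod a b ∧ ∀ u ∈ a, ∃ v ∈ b, ZFSet.pair u v ∈ r

/-- `c` is full in `mv(a, b)`: every element of `c` is a multi-valued function from `a` to `b`,
and every multi-valued function from `a` to `b` contains an element of `c`. -/
def ZFullIn (c a b : ZFSet.{u}) : Prop :=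
  (∀ s ∈ c, Zmv a b s) ∧ ∀ r : ZFSet.{u}, Zmv a b r → ∃ s ∈ c, s ⊆ r

/-- `⋀ a` : the infimum of a set `a` of truth values (subsets of `{∅}`). -/
noncomputable def ZInf (a : ZFSet.{u}) : ZFSet.{u} :=
  ZFSet.sep (fun x => ∀ u ∈ a, x ∈ u) ({∅} : ZFSet.{u})

open ZFSet Cardinal

theorem Ordinal.natCast_toZFSet_mem_omega (n : ℕ) :
    (n : Ordinal.{u}).toZFSet ∈ ZFSet.omega.{u} := by
  induction n with
  | zero => simp
  | succ n ih => simpa [Ordinal.toZFSet_add_one] using omega_succ ih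

theorem ZFSet.omega0_le_rank_omega : Ordinal.omega0 ≤ rank ZFSet.omega.{u} :=
  Ordinal.omega0_le.2 fun n => by
    simpa using (rank_lt_of_mem (Ordinal.natCast_toZFSet_mem_omega n)).le

theorem ZFSet.exists_surjective_Iio_of_card_le {x : ZFSet.{u}} {β : Ordinal.{u}} (hβ : β ≠ 0)
    (h : β.card ≤ x.card) : ∃ e : x → Set.Iio β, Function.Surjective e := by
  have : #(Set.Iio β) ≤ #x := by
    rw [mk_Iio_ordinal, cardinalMk_coe_sort]
    exact lift_le.2 h
  obtain ⟨e⟩ := (Cardinal.le_def _ _).1 this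
  have : Nonempty (Set.Iio β) := ⟨⟨0, pos_iff_ne_zero.2 hβ⟩⟩
  exact ⟨Function.invFun e, Function.invFun_surjective e.injective⟩

namespace ZRegular

variable {I : ZFSet.{u}}

theorem mem_of_mem (hI : ZRegular I) {a x : ZFSet.{u}} (ha : a ∈ I) (hx : x ∈ a) : x ∈ I :=
  hI.1 a ha x hx

/-- Replacement: regularity applied to the graph of `f`. -/
theorem range_mem (hI : ZRegular I) {a : ZFSet.{u}} (ha : a ∈ I) (f : a → ZFSet.{u})
    (hf : ∀ z, f z ∈ I) : range f ∈ I := by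
  set R := range fun z : a => pair z (f z)
  have mem_R : ∀ {x y}, pair x y ∈ R ↔ ∃ hx : x ∈ a, f ⟨x, hx⟩ = y := by
    intro x y
    simp only [R, mem_range, pair_inj]
    constructor
    · rintro ⟨z, rfl, rfl⟩
      exact ⟨z.2, rfl⟩
    · rintro ⟨hx, rfl⟩
      exact ⟨⟨x, hx⟩, rfl, rfl⟩
  have hR : R ⊆ prod I I := by
    intro p hp
    obtain ⟨z, rfl⟩ := mem_range.1 hp
    exact pair_mem_prod.2 ⟨hI.mem_of_mem ha z.2, hf z⟩
  obtain ⟨c, hc, hac, hca⟩ :=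
    hI.2.2 a ha R hR fun x hx => ⟨f ⟨x, hx⟩, hf _, mem_R.2 ⟨hx, rfl⟩⟩
  convert hc using 1
  ext y
  rw [mem_range]
  constructor
  · rintro ⟨z, rfl⟩
    obtain ⟨y, hy, hzy⟩ := hac z z.2
    obtain ⟨_, rfl⟩ := mem_R.1 hzy
    exact hy
  · intro hy
    obtain ⟨x, -, hxy⟩ := hca y hy
    obtain ⟨hx, rfl⟩ := mem_R.1 hxy
    exact ⟨_, rfl⟩

end ZRegular

structure ZUniverse (I : ZFSet.{u}) : Prop where
  regular : ZRegular I
  omega_mem : omega ∈ I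
  sUnion_mem : ∀ a ∈ I, ⋃₀ a ∈ I
  exists_fullIn : ∀ a ∈ I, ∀ b ∈ I, ∃ c ∈ I, ZFullIn c a b

namespace ZUniverse

variable {I a b : ZFSet.{u}} (hI : ZUniverse I)
include hI

theorem mem_of_mem (ha : a ∈ I) (hb : b ∈ a) : b ∈ I :=
  hI.regular.mem_of_mem ha hb

theorem empty_mem : ∅ ∈ I :=
  hI.mem_of_mem hI.omega_mem omega_zero

theorem iUnion_mem (ha : a ∈ I) (f : a → ZFSet.{u}) (hf : ∀ z, f z ∈ I) : (⋃ z, f z) ∈ I :=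
  hI.sUnion_mem _ (hI.regular.range_mem ha f hf)

theorem mem_of_subset (ha : a ∈ I) (hb : b ⊆ a) : b ∈ I := by
  rcases eq_empty_or_nonempty b with rfl | ⟨y₀, hy₀⟩
  · exact hI.empty_mem
  classical
  convert hI.regular.range_mem ha (fun z => if z.1 ∈ b then z.1 else y₀)
    (fun z => by split_ifs <;> exact hI.mem_of_mem ha (hb ‹_›)) using 1
  ext y
  simp only [mem_range]
  constructor
  · intro hy
    exact ⟨⟨y, hb hy⟩, if_pos hy⟩
  · rintro ⟨z, rfl⟩
    split_ifs with h
    exacts [h, hy₀]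

theorem powerset_mem (ha : a ∈ I) : powerset a ∈ I := by
  have one_mem_omega : ({∅} : ZFSet.{u}) ∈ omega := omega_succ omega_zero
  obtain ⟨c, hc, hc_mv, hc_full⟩ := hI.exists_fullIn a ha omega hI.omega_mem
  have range_mem : range (fun s : c => ZFSet.sep (fun x => pair x {∅} ∈ s.1) a) ∈ I :=
    hI.regular.range_mem hc _ fun s => hI.mem_of_subset ha fun x hx => (mem_sep.1 hx).1
  refine hI.mem_of_subset range_mem fun b hb => ?_
  rw [mem_powerset] at hb
  -- the characteristic function of `b`, with truth values `{∅}` and `∅`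
  set χ := prod b {{∅}} ∪ prod (a \ b) {∅}
  have mem_χ : ∀ {x v}, pair x v ∈ χ ↔ x ∈ b ∧ v = {∅} ∨ (x ∈ a ∧ x ∉ b) ∧ v = ∅ := by
    simp [χ]
  have hχ : Zmv a omega χ := by
    refine ⟨fun p hp => ?_, fun x hx => ?_⟩
    · simp only [χ, mem_union, mem_prod, mem_sdiff, mem_singleton] at hp
      rcases hp with ⟨x, hx, v, rfl, rfl⟩ | ⟨x, ⟨hx, -⟩, v, rfl, rfl⟩
      exacts [pair_mem_prod.2 ⟨hb hx, one_mem_omega⟩, pair_mem_prod.2 ⟨hx, omega_zero⟩]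
    · by_cases hxb : x ∈ b
      exacts [⟨_, one_mem_omega, mem_χ.2 (.inl ⟨hxb, rfl⟩)⟩,
        ⟨∅, omega_zero, mem_χ.2 (.inr ⟨⟨hx, hxb⟩, rfl⟩)⟩]
  obtain ⟨s, hs, hsχ⟩ := hc_full χ hχ
  refine mem_range.2 ⟨⟨s, hs⟩, ext fun x => ?_⟩
  rw [mem_sep]
  constructor
  · rintro ⟨-, hx⟩
    obtain ⟨hxb, -⟩ | ⟨-, h⟩ := mem_χ.1 (hsχ hx)
    exacts [hxb, ((eq_empty _).1 h ∅ (mem_singleton.2 rfl)).elim]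
  · intro hx
    obtain ⟨v, -, hv⟩ := (hc_mv s hs).2 x (hb hx)
    obtain ⟨-, rfl⟩ | ⟨⟨-, hxb⟩, -⟩ := mem_χ.1 (hsχ hv)
    exacts [⟨hb hx, hv⟩, absurd hx hxb]

theorem toZFSet_rank_mem {x : ZFSet.{u}} (hx : x ∈ I) : (rank x).toZFSet ∈ I := by
  induction x using ZFSet.inductionOn with
  | _ x ih =>
  refine hI.mem_of_subset (hI.iUnion_mem hx (fun y => powerset (rank y.1).toZFSet)
    fun y => hI.powerset_mem (ih y y.2 (hI.mem_of_mem hx y.2))) fun z hz => ?_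
  obtain ⟨β, hβ, rfl⟩ := Ordinal.mem_toZFSet_iff.1 hz
  obtain ⟨y, hy, hβy⟩ := lt_rank_iff.1 hβ
  exact mem_iUnion.2 ⟨⟨y, hy⟩, mem_powerset.2 (Ordinal.toZFSet_subset_toZFSet_iff.2 hβy)⟩

theorem toZFSet_mem {β : Ordinal.{u}} (hβ : β < rank I) : β.toZFSet ∈ I := by
  obtain ⟨x, hx, hβx⟩ := lt_rank_iff.1 hβ
  exact hI.mem_of_subset (hI.toZFSet_rank_mem hx) (Ordinal.toZFSet_subset_toZFSet_iff.2 hβx)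

theorem vonNeumann_mem {β : Ordinal.{u}} (hβ : β < rank I) : V_ β ∈ I := by
  induction β using WellFoundedLT.induction with
  | _ β ih =>
  have rank_lt : ∀ z : β.toZFSet, rank z.1 < β := fun z => by
    simpa using rank_lt_of_mem z.2
  refine hI.mem_of_subset (hI.iUnion_mem (hI.toZFSet_mem hβ) (fun z => powerset (V_ (rank z.1)))
    fun z => hI.powerset_mem (ih _ (rank_lt z) ((rank_lt z).trans hβ))) fun x hx => ?_
  obtain ⟨γ, hγ, hxγ⟩ := mem_vonNeumann'.1 hx
  exact mem_iUnion.2 ⟨⟨γ.toZFSet, Ordinal.toZFSet_mem_toZFSet_iff.2 hγ⟩,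
    by rwa [mem_powerset, Ordinal.rank_toZFSet]⟩

theorem mem_iff_rank_lt {x : ZFSet.{u}} : x ∈ I ↔ rank x < rank I :=
  ⟨rank_lt_of_mem, fun hx => hI.mem_of_mem (hI.powerset_mem (hI.vonNeumann_mem hx))
    (mem_powerset.2 (subset_vonNeumann_self x))⟩

theorem iSup_add_one_lt_rank (ha : a ∈ I) (f : a → Ordinal.{u}) (hf : ∀ z, f z < rank I) :
    ⨆ z, f z + 1 < rank I := by
  simpa [Order.succ_eq_add_one] using rank_lt_of_mem
    (hI.regular.range_mem ha (fun z => (f z).toZFSet) fun z => hI.toZFSet_mem (hf z))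

theorem lt_rank_of_card_le (ha : a ∈ I) {β : Ordinal.{u}} (h : β.card ≤ a.card) :
    β < rank I := by
  induction β using WellFoundedLT.induction with
  | _ β ih =>
  rcases eq_or_ne β 0 with rfl | hβ
  · exact (rank_lt_of_mem ha).trans_le' zero_le
  obtain ⟨e, he⟩ := exists_surjective_Iio_of_card_le hβ h
  refine lt_of_le_of_lt (le_of_forall_lt fun γ hγ => ?_) (hI.iSup_add_one_lt_rank ha
    (fun z => (e z).1) fun z => ih _ (e z).2 ((Ordinal.card_le_card (e z).2.le).trans h))
  obtain ⟨z, hz⟩ := he ⟨γ, hγ⟩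
  simpa [hz] using Ordinal.lt_iSup_add_one (fun z => (e z).1) z

theorem two_power_ord_lt_rank {μ : Cardinal.{u}} (hμ : μ.ord < rank I) :
    ((2 : Cardinal.{u}) ^ μ).ord < rank I :=
  hI.lt_rank_of_card_le (hI.powerset_mem (hI.toZFSet_mem hμ)) (by simp [Ordinal.card_toZFSet])

theorem ord_card_rank : (rank I).card.ord = rank I := by
  refine (ord_card_le _).antisymm (not_lt.1 fun h => (cantor (rank I).card).not_ge ?_)
  simpa using Ordinal.card_le_card (hI.two_power_ord_lt_rank h).le

theorem card_rank_le_cof : (rank I).card ≤ (rank I).cof := by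
  by_contra! h
  set α := (rank I).cof.ord
  have hα : α < rank I := (ord_lt_ord.2 h).trans_le (ord_card_le _)
  have hα0 : α ≠ 0 := by
    simpa [α, Ordinal.cof_eq_zero] using (rank_lt_of_mem hI.empty_mem).ne'
  obtain ⟨f, hf⟩ := Ordinal.exists_isFundamentalSeq (o := rank I) (a := α) rfl
  obtain ⟨e, he⟩ := exists_surjective_Iio_of_card_le (x := α.toZFSet) hα0
    (by simp [Ordinal.card_toZFSet])
  have := hI.iSup_add_one_lt_rank (hI.toZFSet_mem hα) (fun z => (f (e z)).1) fun z => (f (e z)).2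
  rw [he.iSup_comp (fun i => (f i).1 + 1), hf.iSup_add_one_eq] at this
  exact this.false

theorem isInaccessible_card_rank : (rank I).card.IsInaccessible := by
  have hθ := hI.ord_card_rank
  refine ⟨?_, hθ.symm ▸ hI.card_rank_le_cof, fun μ hμ => ?_⟩
  · have := omega0_le_rank_omega.trans_lt (rank_lt_of_mem hI.omega_mem)
    rw [← hθ, lt_ord, Ordinal.card_omega0] at this
    exact this
  · have := hI.two_power_ord_lt_rank (hθ ▸ ord_lt_ord.2 hμ)
    rwa [← hθ, ord_lt_ord] at this

end ZUniverse

theorem weakly_inaccessible_is_Vkappa_general (I : ZFSet.{u})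
    (h1 : ZRegular I)
    (h2 : ZFSet.omega ∈ I)
    (h3 : ∀ a ∈ I, ZFSet.sUnion a ∈ I)
    (h5 : ∀ a ∈ I, ∀ b ∈ I, ∃ c ∈ I, ZFullIn c a b) :
    ∃ κ : Cardinal.{u}, κ.IsInaccessible ∧
      ∀ x : ZFSet.{u}, x ∈ I ↔ ZFSet.rank x < κ.ord := by
  have hI : ZUniverse I := ⟨h1, h2, h3, h5⟩
  refine ⟨_, hI.isInaccessible_card_rank, fun x => ?_⟩
  rw [hI.ord_card_rank]
  exact hI.mem_iff_rank_lt

/-- Proposition 6.4 (a ZFC result): a weakly inaccessible set, characterized algebraically, is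
`V_κ` for some strongly inaccessible cardinal `κ`. -/
theorem weakly_inaccessible_is_Vkappa (I : ZFSet.{u})
    (h1 : ZRegular I)
    (h2 : ZFSet.omega ∈ I)
    (h3 : ∀ a ∈ I, ZFSet.sUnion a ∈ I)
    (h4 : ∀ a ∈ I, (∀ u ∈ a, u ⊆ ({∅} : ZFSet.{u})) → ZInf a ∈ I)
    (h5 : ∀ a ∈ I, ∀ b ∈ I, ∃ c ∈ I, ZFullIn c a b) :
    ∃ κ : Cardinal.{u}, κ.IsInaccessible ∧
      ∀ x : ZFSet.{u}, x ∈ I ↔ ZFSet.rank x < κ.ord :=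
  weakly_inaccessible_is_Vkappa_general I h1 h2 h3 h5
end
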